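/- Let v_{i-1}, v_i, v_{i+1} be real numbers with b = v_{i+1} - v_i ≠ 0 and r = (v_i - v_{i-1})/b, and suppose r ≤ 0 (non-monotone data at x_i). Then for every β with 0 ≤ β ≤ 1/(1 - r), the value P(β) = β·(3v_i - v_{i-1})/2 + (1-β)·(v_i + v_{i+1})/2 satisfies min(v_{i-1}, v_i, v_{i+1}) ≤ P(β) ≤ max(v_{i-1}, v_i, v_{i+1}). -/

import Mathlib

/-!
Writing `b = v_{i+1} - v_i`, the hypothesis says `v_i - v_{i-1} = r b`, and then
`P(β) = v_i + (1 - β (1 - r)) b / 2`. For `0 ≤ β ≤ 1/(1 - r)` the parameter `(1 - β (1 - r)) / 2`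
lies in `[0, 1/2]`, so `P(β)` lies on the segment between `v_i` and `v_{i+1}`.
-/

open AffineMap Set

lemma weighted_interpolant_eq_lineMap {vm v vp r : ℝ} (hvm : v - vm = r * (vp - v)) (β : ℝ) :
    β * (3 * v - vm) / 2 + (1 - β) * (v + vp) / 2 = lineMap v vp ((1 - β * (1 - r)) / 2) := by
  rw [lineMap_apply_ring']
  linear_combination β / 2 * hvm

lemma min_le_and_le_max_of_mem_uIcc {vm v vp x : ℝ} (hx : x ∈ uIcc v vp) :
    min (min vm v) vp ≤ x ∧ x ≤ max (max vm v) vp := by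
  obtain ⟨hlo, hhi⟩ := hx
  constructor
  · calc min (min vm v) vp ≤ min v vp := min_le_min_right vp (min_le_right vm v)
      _ ≤ x := hlo
  · calc x ≤ max v vp := hhi
      _ ≤ max (max vm v) vp := max_le_max_right vp (le_max_right vm v)

theorem stmt_16 (vm v vp : ℝ) (hb : vp - v ≠ 0)
    (r : ℝ) (hr : r = (v - vm) / (vp - v)) (hr0 : r ≤ 0)
    (β : ℝ) (h0 : 0 ≤ β) (h1 : β ≤ 1 / (1 - r)) :
    min (min vm v) vp ≤ β * (3 * v - vm) / 2 + (1 - β) * (v + vp) / 2 ∧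
      β * (3 * v - vm) / 2 + (1 - β) * (v + vp) / 2 ≤ max (max vm v) vp := by
  have hvm : v - vm = r * (vp - v) := by rw [hr, div_mul_cancel₀ _ hb]
  have hpos : 0 < 1 - r := by linarith
  have hle : β * (1 - r) ≤ 1 := (le_div_iff₀ hpos).mp h1
  have hnonneg : 0 ≤ β * (1 - r) := mul_nonneg h0 hpos.le
  rw [weighted_interpolant_eq_lineMap hvm]
  apply min_le_and_le_max_of_mem_uIcc
  rw [← segment_eq_uIcc]
  exact lineMap_mem_segment ℝ v vp ⟨by linarith, by linarith⟩
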